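/- For every integer k ≥ 1 and every integer m with 1 ≤ m < 2^k, the series ∑_{n=1}^{∞} f_k(n+m)/n gives the greedy representation of U_{k,m}; that is, s_n(U_{k,m}) = f_k(n+m) for all n ≥ 1. In particular, U_{k,m} ∈ X_k. -/

import Mathlib

open Filter

/-- Greedy partial sums: `gSigma τ n = σ_n(τ)`. -/
noncomputable def gSigma (τ : ℝ) : ℕ → ℝ
  | 0 => 0
  | n + 1 => gSigma τ n + (if gSigma τ n ≤ τ then (1 : ℝ) else -1) / (n + 1)

/-- Greedy signs: for `n ≥ 1`, `gSign τ n = s_n(τ)`. -/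
noncomputable def gSign (τ : ℝ) (n : ℕ) : ℝ :=
  if gSigma τ (n - 1) ≤ τ then 1 else -1

/-- Thue–Morse signs: `tmSign n = ε_n`. -/
noncomputable def tmSign (n : ℕ) : ℝ := (-1 : ℝ) ^ (Nat.digits 2 n).sum

/-- `fPer k` is the `2^k`-periodic function with `fPer k n = ε_n` for `0 ≤ n < 2^k`. -/
noncomputable def fPer (k n : ℕ) : ℝ := tmSign (n % 2 ^ k)

/-- `U_{k,m} = ∑_{n=1}^∞ f_k(n+m)/n` (limit of partial sums). -/
noncomputable def Uconst (k m : ℕ) : ℝ :=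
  limUnder atTop (fun N : ℕ => ∑ n ∈ Finset.Icc 1 N, fPer k (n + m) / (n : ℝ))

/-- The exceptional set `X_k`. -/
def Xset (k : ℕ) : Set ℝ :=
  {τ | ∃ N m : ℕ, m < 2 ^ k ∧ ∀ n : ℕ, 1 ≤ n → N ≤ n → gSign τ n = fPer k (n + m)}

/-!
The greedy expansion of `τ` follows a sign sequence `s` as soon as every tail `∑_{j ≥ n} s_j / j`
of the series for `τ` has the sign of its first term `s_n`. For `s_n = f_k(n + m)` this holds more
generally for `∑_j f_k(c + j) d_j` with `d` completely monotone and tending to `0`, by induction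
on `k`. Since `ε_{2n} = ε_n` and `ε_{2n+1} = -ε_n`, grouping the terms of a level-`(k+1)` sum that
starts at an even index in pairs gives a level-`k` sum with the weights `d_{2t} - d_{2t+1}`, which
are again completely monotone; at level `0` all these paired terms are positive. A sum starting
at an odd index is its first term `± d_0` plus an even-start sum, which is bounded by `d_1 < d_0`.
-/

open Finset fwdDiff Topology

lemma tmSign_two_mul (n : ℕ) : tmSign (2 * n) = tmSign n := by
  rcases Nat.eq_zero_or_pos n with rfl | hn
  · rfl
  · rw [tmSign, Nat.digits_def' (by norm_num) (by omega)]
    simp [tmSign]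

lemma tmSign_two_mul_add_one (n : ℕ) : tmSign (2 * n + 1) = -tmSign n := by
  rw [tmSign, Nat.digits_def' (by norm_num) (by omega)]
  simp [tmSign, Nat.mul_add_div, pow_add]

lemma tmSign_eq_one_or_neg_one (n : ℕ) : tmSign n = 1 ∨ tmSign n = -1 :=
  neg_one_pow_eq_or ℝ _

lemma fPer_zero_left (n : ℕ) : fPer 0 n = 1 := by
  simp [fPer, tmSign, Nat.mod_one]

lemma fPer_succ (K n : ℕ) : fPer (K + 1) n = tmSign (n % 2 + 2 * (n / 2 % 2 ^ K)) := by
  rw [fPer, pow_succ', Nat.mod_mul]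

lemma fPer_succ_two_mul (K u : ℕ) : fPer (K + 1) (2 * u) = fPer K u := by
  rw [fPer_succ, Nat.mul_mod_right, Nat.mul_div_cancel_left _ two_pos, zero_add, tmSign_two_mul,
    fPer]

lemma fPer_succ_two_mul_add_one (K u : ℕ) : fPer (K + 1) (2 * u + 1) = -fPer K u := by
  rw [fPer_succ, Nat.mul_add_mod, Nat.mul_add_div two_pos, add_comm, tmSign_two_mul_add_one, fPer]
  norm_num

lemma fPer_eq_one_or_neg_one (k n : ℕ) : fPer k n = 1 ∨ fPer k n = -1 :=
  tmSign_eq_one_or_neg_one _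

lemma fPer_mul_self (k n : ℕ) : fPer k n * fPer k n = 1 := by
  rcases fPer_eq_one_or_neg_one k n with h | h <;> simp [h]

lemma abs_fPer (k n : ℕ) : |fPer k n| = 1 := by
  rcases fPer_eq_one_or_neg_one k n with h | h <;> simp [h]

lemma fwdDiff_iter_neg {M G : Type*} [AddCommMonoid M] [AddCommGroup G] (h : M) (f : M → G)
    (n : ℕ) : Δ_[h] ^[n] (-f) = -Δ_[h] ^[n] f := by
  simpa using fwdDiff_iter_const_smul h (-1 : ℤ) f n

def StrictlyCompletelyMonotone (d : ℕ → ℝ) : Prop :=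
  ∀ i t, 0 < (-1 : ℝ) ^ i * Δ_[1] ^[i] d t

def pairDiff (d : ℕ → ℝ) (t : ℕ) : ℝ := d (2 * t) - d (2 * t + 1)

namespace StrictlyCompletelyMonotone

variable {d e : ℕ → ℝ}

lemma pos (hd : StrictlyCompletelyMonotone d) (t : ℕ) : 0 < d t := by
  simpa using hd 0 t

lemma strictAnti (hd : StrictlyCompletelyMonotone d) : StrictAnti d :=
  strictAnti_nat_of_succ_lt fun t => by simpa [fwdDiff] using hd 1 t

lemma add (hd : StrictlyCompletelyMonotone d) (he : StrictlyCompletelyMonotone e) :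
    StrictlyCompletelyMonotone (d + e) := fun i t => by
  simpa [mul_add] using add_pos (hd i t) (he i t)

lemma comp_add_one (hd : StrictlyCompletelyMonotone d) :
    StrictlyCompletelyMonotone (fun t => d (t + 1)) := fun i t => by
  rw [fwdDiff_iter_comp_add]
  exact hd i (t + 1)

lemma neg_fwdDiff (hd : StrictlyCompletelyMonotone d) :
    StrictlyCompletelyMonotone (-Δ_[1] d) := fun i t => by
  simpa [fwdDiff_iter_neg, pow_succ, Function.iterate_succ_apply] using hd (i + 1) t

lemma comp_two_mul (hd : StrictlyCompletelyMonotone d) :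
    StrictlyCompletelyMonotone (fun t => d (2 * t)) := by
  intro i
  induction i generalizing d with
  | zero => simpa using fun t => hd.pos (2 * t)
  | succ i ih =>
    intro t
    have hstep : Δ_[1] (fun t => d (2 * t))
        = -fun t => (-Δ_[1] d + fun s => (-Δ_[1] d) (s + 1)) (2 * t) := by
      ext s
      simp only [fwdDiff, Pi.neg_apply, Pi.add_apply]
      ring_nf
    have := ih (hd.neg_fwdDiff.add hd.neg_fwdDiff.comp_add_one) t
    rw [Function.iterate_succ_apply, hstep, fwdDiff_iter_neg, pow_succ, Pi.neg_apply]
    linarith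

lemma pairDiff (hd : StrictlyCompletelyMonotone d) :
    StrictlyCompletelyMonotone (_root_.pairDiff d) := by
  have : _root_.pairDiff d = fun t => (-Δ_[1] d) (2 * t) := by
    ext t
    simp [_root_.pairDiff, fwdDiff]
  rw [this]
  exact hd.neg_fwdDiff.comp_two_mul

end StrictlyCompletelyMonotone

lemma neg_one_pow_mul_fwdDiff_iter_inv_add {β : ℝ} (hβ : 0 < β) (i t : ℕ) :
    (-1 : ℝ) ^ i * Δ_[1] ^[i] (fun t : ℕ => (β + t)⁻¹) t
      = i.factorial / (ascPochhammer ℝ (i + 1)).eval (β + t) := by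
  induction i generalizing t with
  | zero => simp
  | succ i ih =>
    have hx : (0 : ℝ) < β + t := by positivity
    have ha := ascPochhammer_pos (i + 1) _ hx
    have hb := ascPochhammer_pos (i + 1) (β + t + 1) (by positivity)
    have hab : (ascPochhammer ℝ (i + 1)).eval (β + t) * (β + t + (i + 1 : ℕ))
        = (β + t) * (ascPochhammer ℝ (i + 1)).eval (β + t + 1) := by
      rw [← ascPochhammer_succ_eval, ascPochhammer_succ_left]
      simp
    have hx1 : β + ((t + 1 : ℕ) : ℝ) = β + t + 1 := by push_cast; ring
    rw [Function.iterate_succ_apply', fwdDiff, pow_succ,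
      show ∀ a b : ℝ, (-1) ^ i * -1 * (a - b) = (-1) ^ i * b - (-1) ^ i * a by intros; ring,
      ih, ih, hx1, ascPochhammer_succ_eval (i + 1) (β + t), Nat.factorial_succ]
    field_simp
    push_cast at hab ⊢
    linear_combination -(i.factorial : ℝ) * hab

lemma strictlyCompletelyMonotone_inv_add {β : ℝ} (hβ : 0 < β) :
    StrictlyCompletelyMonotone (fun t : ℕ => (β + t)⁻¹) := fun i t => by
  rw [neg_one_pow_mul_fwdDiff_iter_inv_add hβ]
  exact div_pos (by positivity) (ascPochhammer_pos _ _ (by positivity))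

lemma Filter.Tendsto.of_comp_two_mul_of_comp_two_mul_add_one {α : Type*} {l : Filter α}
    {S : ℕ → α} (heven : Tendsto (fun n => S (2 * n)) atTop l)
    (hodd : Tendsto (fun n => S (2 * n + 1)) atTop l) : Tendsto S atTop l := by
  intro U hU
  obtain ⟨a, ha⟩ := mem_atTop_sets.mp (heven hU)
  obtain ⟨b, hb⟩ := mem_atTop_sets.mp (hodd hU)
  refine mem_atTop_sets.mpr ⟨2 * (a + b), fun n hn => ?_⟩
  obtain ⟨k, rfl | rfl⟩ := n.even_or_odd'
  exacts [ha k (by omega), hb k (by omega)]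

lemma tendsto_pairDiff {d : ℕ → ℝ} (h0 : Tendsto d atTop (𝓝 0)) :
    Tendsto (pairDiff d) atTop (𝓝 0) := by
  show Tendsto (fun t => d (2 * t) - d (2 * t + 1)) atTop (𝓝 0)
  have h2 : Tendsto (fun t : ℕ => 2 * t) atTop atTop := tendsto_id.const_mul_atTop' two_pos
  simpa [Function.comp_def] using (h0.comp h2).sub (h0.comp ((tendsto_add_atTop_nat 1).comp h2))

noncomputable def tmPartialSum (K c : ℕ) (d : ℕ → ℝ) (n : ℕ) : ℝ := ∑ j ∈ range n, fPer K (c + j) * d j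

def TmSumHasLeadingSign (K c : ℕ) (d : ℕ → ℝ) : Prop :=
  ∃ T, Tendsto (tmPartialSum K c d) atTop (𝓝 T) ∧ 0 < fPer K c * T

lemma tmPartialSum_succ_two_mul (K v : ℕ) (d : ℕ → ℝ) (N : ℕ) :
    tmPartialSum (K + 1) (2 * v) d (2 * N) = tmPartialSum K v (pairDiff d) N := by
  induction N with
  | zero => simp [tmPartialSum]
  | succ N ih =>
    simp only [tmPartialSum] at ih ⊢
    rw [show 2 * (N + 1) = 2 * N + 1 + 1 by ring, sum_range_succ, sum_range_succ, ih,
      sum_range_succ, show 2 * v + (2 * N + 1) = 2 * (v + N) + 1 by ring,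
      show 2 * v + 2 * N = 2 * (v + N) by ring, fPer_succ_two_mul, fPer_succ_two_mul_add_one,
      pairDiff]
    ring

lemma tmPartialSum_succ (K c : ℕ) (d : ℕ → ℝ) (n : ℕ) :
    tmPartialSum K c d (n + 1) = fPer K c * d 0 + tmPartialSum K (c + 1) (fun j => d (j + 1)) n := by
  simp only [tmPartialSum, sum_range_succ', add_zero, add_assoc, add_comm 1]
  ring

lemma pairDiff_nonneg {d : ℕ → ℝ} (hd : Antitone d) (t : ℕ) : 0 ≤ pairDiff d t :=
  sub_nonneg.mpr (hd (by omega))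

lemma sum_range_pairDiff_le {d : ℕ → ℝ} (hd : Antitone d) (N : ℕ) :
    ∑ t ∈ range N, pairDiff d t ≤ d 0 - d (2 * N) := by
  calc ∑ t ∈ range N, pairDiff d t ≤ ∑ t ∈ range N, (d (2 * t) - d (2 * (t + 1))) :=
        sum_le_sum fun t _ => sub_le_sub_left (hd (by omega)) _
    _ = d 0 - d (2 * N) := by simpa using sum_range_sub' (fun t => d (2 * t)) N

lemma abs_tmPartialSum_pairDiff_le {d : ℕ → ℝ} (hd : Antitone d) (hd0 : ∀ t, 0 ≤ d t)
    (K v N : ℕ) : |tmPartialSum K v (pairDiff d) N| ≤ d 0 :=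
  calc |tmPartialSum K v (pairDiff d) N|
      ≤ ∑ t ∈ range N, |fPer K (v + t) * pairDiff d t| := abs_sum_le_sum_abs _ _
    _ = ∑ t ∈ range N, pairDiff d t := by
        refine sum_congr rfl fun t _ => ?_
        rw [abs_mul, abs_fPer, one_mul, abs_of_nonneg (pairDiff_nonneg hd t)]
    _ ≤ d 0 := (sum_range_pairDiff_le hd N).trans (sub_le_self _ (hd0 _))

lemma tmSumHasLeadingSign_zero_pairDiff {d : ℕ → ℝ} (hd : StrictlyCompletelyMonotone d)
    (v : ℕ) : TmSumHasLeadingSign 0 v (pairDiff d) := by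
  have hsum : Summable (pairDiff d) :=
    summable_of_sum_range_le (fun t => (hd.pairDiff.pos t).le) fun N =>
      (sum_range_pairDiff_le hd.strictAnti.antitone N).trans (sub_le_self _ (hd.pos _).le)
  refine ⟨∑' t, pairDiff d t, ?_, ?_⟩
  · have : tmPartialSum 0 v (pairDiff d) = fun N => ∑ t ∈ range N, pairDiff d t := by
      ext N
      simp [tmPartialSum, fPer_zero_left]
    exact this ▸ hsum.hasSum.tendsto_sum_nat
  · rw [fPer_zero_left, one_mul]
    exact hsum.tsum_pos (fun t => (hd.pairDiff.pos t).le) 0 (hd.pairDiff.pos 0)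

lemma tendsto_tmPartialSum_two_mul {K v : ℕ} {d : ℕ → ℝ} {T : ℝ} (h0 : Tendsto d atTop (𝓝 0))
    (hT : Tendsto (tmPartialSum K v (pairDiff d)) atTop (𝓝 T)) :
    Tendsto (tmPartialSum (K + 1) (2 * v) d) atTop (𝓝 T) := by
  have heven : Tendsto (fun N => tmPartialSum (K + 1) (2 * v) d (2 * N)) atTop (𝓝 T) := by
    simpa only [tmPartialSum_succ_two_mul] using hT
  have hlast : Tendsto (fun N => fPer (K + 1) (2 * v + 2 * N) * d (2 * N)) atTop (𝓝 0) := by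
    have h2 := (h0.comp (tendsto_id.const_mul_atTop' two_pos)).norm
    rw [norm_zero] at h2
    refine squeeze_zero_norm (fun N => le_of_eq ?_) h2
    simp [abs_fPer]
  refine heven.of_comp_two_mul_of_comp_two_mul_add_one ?_
  simpa [tmPartialSum, sum_range_succ] using heven.add hlast

lemma tmSumHasLeadingSign_of_tail {K c : ℕ} {d : ℕ → ℝ} {T : ℝ}
    (hT : Tendsto (tmPartialSum K (c + 1) (fun j => d (j + 1))) atTop (𝓝 T)) (hTd : |T| < d 0) :
    TmSumHasLeadingSign K c d := by
  refine ⟨fPer K c * d 0 + T, (tendsto_add_atTop_iff_nat 1).mp ?_, ?_⟩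
  · simpa only [tmPartialSum_succ] using hT.const_add (fPer K c * d 0)
  · have hεT : |fPer K c * T| < d 0 := by rwa [abs_mul, abs_fPer, one_mul]
    rw [mul_add, ← mul_assoc, fPer_mul_self, one_mul]
    linarith [neg_abs_le (fPer K c * T)]

lemma tmSumHasLeadingSign_succ {K : ℕ}
    (hpair : ∀ v (d : ℕ → ℝ), StrictlyCompletelyMonotone d → Tendsto d atTop (𝓝 0) →
      TmSumHasLeadingSign K v (pairDiff d))
    {d : ℕ → ℝ} (hd : StrictlyCompletelyMonotone d) (h0 : Tendsto d atTop (𝓝 0)) (c : ℕ) :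
    TmSumHasLeadingSign (K + 1) c d := by
  obtain ⟨v, rfl | rfl⟩ := c.even_or_odd'
  · obtain ⟨T, hT, hsign⟩ := hpair v d hd h0
    exact ⟨T, tendsto_tmPartialSum_two_mul h0 hT, by rwa [fPer_succ_two_mul]⟩
  · have hd' := hd.comp_add_one
    obtain ⟨T, hT, -⟩ := hpair (v + 1) _ hd' ((tendsto_add_atTop_iff_nat 1).mpr h0)
    have hT' := tendsto_tmPartialSum_two_mul ((tendsto_add_atTop_iff_nat 1).mpr h0) hT
    refine tmSumHasLeadingSign_of_tail (by simpa [mul_add] using hT') ?_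
    calc |T| ≤ d 1 := le_of_tendsto hT.abs (Eventually.of_forall fun N =>
            abs_tmPartialSum_pairDiff_le hd'.strictAnti.antitone (fun t => (hd'.pos t).le) K _ N)
      _ < d 0 := hd.strictAnti zero_lt_one

lemma tmSumHasLeadingSign_pairDiff (K v : ℕ) {d : ℕ → ℝ} (hd : StrictlyCompletelyMonotone d)
    (h0 : Tendsto d atTop (𝓝 0)) : TmSumHasLeadingSign K v (pairDiff d) := by
  induction K generalizing v d with
  | zero => exact tmSumHasLeadingSign_zero_pairDiff hd v
  | succ K ih =>
    exact tmSumHasLeadingSign_succ (fun v _ hd h0 => ih v hd h0) hd.pairDiff (tendsto_pairDiff h0) v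

lemma tmSumHasLeadingSign_inv_add (K c n : ℕ) :
    TmSumHasLeadingSign (K + 1) c (fun j : ℕ => ((n : ℝ) + 1 + j)⁻¹) :=
  tmSumHasLeadingSign_succ (fun v _ hd h0 => tmSumHasLeadingSign_pairDiff K v hd h0)
    (strictlyCompletelyMonotone_inv_add (by positivity))
    (tendsto_inv_atTop_zero.comp (tendsto_atTop_add_const_left _ _ tendsto_natCast_atTop_atTop)) c

lemma ite_le_eq_of_mul_pos {x τ s : ℝ} (hs : s = 1 ∨ s = -1) (h : 0 < s * (τ - x)) :
    (if x ≤ τ then (1 : ℝ) else -1) = s := by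
  rcases hs with rfl | rfl
  · exact if_pos (by linarith)
  · exact if_neg (by linarith)

lemma gSigma_eq_sum_of_forall_mul_pos {τ : ℝ} {s : ℕ → ℝ} (hs : ∀ n, s n = 1 ∨ s n = -1)
    (h : ∀ n, 0 < s n * (τ - ∑ j ∈ range n, s j / (j + 1))) (n : ℕ) :
    gSigma τ n = ∑ j ∈ range n, s j / (j + 1) := by
  induction n with
  | zero => rfl
  | succ n ih => rw [gSigma, sum_range_succ, ← ih, ite_le_eq_of_mul_pos (hs n) (ih ▸ h n)]

lemma gSign_succ_eq_of_forall_mul_pos {τ : ℝ} {s : ℕ → ℝ} (hs : ∀ n, s n = 1 ∨ s n = -1)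
    (h : ∀ n, 0 < s n * (τ - ∑ j ∈ range n, s j / (j + 1))) (n : ℕ) : gSign τ (n + 1) = s n := by
  rw [gSign, Nat.add_sub_cancel, gSigma_eq_sum_of_forall_mul_pos hs h]
  exact ite_le_eq_of_mul_pos (hs n) (h n)

lemma tendsto_sum_range_nat_add {a : ℕ → ℝ} {τ : ℝ}
    (h : Tendsto (fun N => ∑ j ∈ range N, a j) atTop (𝓝 τ)) (n : ℕ) :
    Tendsto (fun N => ∑ j ∈ range N, a (n + j)) atTop (𝓝 (τ - ∑ j ∈ range n, a j)) := by
  have h' := ((tendsto_add_atTop_iff_nat n).mpr h).sub_const (∑ j ∈ range n, a j)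
  simpa [add_comm _ n, sum_range_add] using h'

lemma tmPartialSum_inv_add (k c n : ℕ) :
    tmPartialSum k (c + n) (fun j : ℕ => ((n : ℝ) + 1 + j)⁻¹)
      = fun N => ∑ j ∈ range N, fPer k (c + (n + j)) / ((n + j : ℕ) + 1) := by
  ext N
  refine sum_congr rfl fun j _ => ?_
  push_cast
  ring_nf

lemma tendsto_sum_range_Uconst (K m : ℕ) :
    Tendsto (fun N => ∑ j ∈ range N, fPer (K + 1) (m + 1 + j) / (j + 1)) atTop
      (𝓝 (Uconst (K + 1) m)) := by
  have hU : (fun N => ∑ n ∈ Icc 1 N, fPer (K + 1) (n + m) / (n : ℝ))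
      = fun N => ∑ j ∈ range N, fPer (K + 1) (m + 1 + j) / (j + 1) := by
    ext N
    rw [← Ico_add_one_right_eq_Icc, sum_Ico_eq_sum_range, Nat.add_sub_cancel]
    refine sum_congr rfl fun j _ => ?_
    push_cast
    ring_nf
  obtain ⟨T, hT, -⟩ := tmSumHasLeadingSign_inv_add K (m + 1 + 0) 0
  simp only [tmPartialSum_inv_add, zero_add] at hT
  rwa [Uconst, hU, hT.limUnder_eq]

lemma fPer_mul_Uconst_sub_sum_pos (K m n : ℕ) :
    0 < fPer (K + 1) (m + 1 + n)
      * (Uconst (K + 1) m - ∑ j ∈ range n, fPer (K + 1) (m + 1 + j) / (j + 1)) := by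
  obtain ⟨T, hT, hpos⟩ := tmSumHasLeadingSign_inv_add K (m + 1 + n) n
  have htail := tendsto_sum_range_nat_add (tendsto_sum_range_Uconst K m) n
  simp only [tmPartialSum_inv_add] at hT
  push_cast at hT htail
  rwa [tendsto_nhds_unique hT htail] at hpos

theorem stmt_17_general (k : ℕ) (hk : 1 ≤ k) (m : ℕ) (hm : m < 2 ^ k) :
    (∀ n : ℕ, 1 ≤ n → gSign (Uconst k m) n = fPer k (n + m)) ∧
    Uconst k m ∈ Xset k := by
  obtain ⟨K, rfl⟩ : ∃ K, k = K + 1 := ⟨k - 1, by omega⟩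
  have hgreedy : ∀ n, 1 ≤ n → gSign (Uconst (K + 1) m) n = fPer (K + 1) (n + m) := by
    intro n hn
    obtain ⟨n, rfl⟩ : ∃ j, n = j + 1 := ⟨n - 1, by omega⟩
    rw [gSign_succ_eq_of_forall_mul_pos (fun j => fPer_eq_one_or_neg_one _ _)
      (fPer_mul_Uconst_sub_sum_pos K m)]
    ring_nf
  exact ⟨hgreedy, 1, m, hm, fun n hn _ => hgreedy n hn⟩

/-- Corollary 5 of the paper: for `k ≥ 1` and `1 ≤ m < 2^k` the series
`∑ f_k(n+m)/n` is the greedy representation of `U_{k,m}`, i.e.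
`s_n(U_{k,m}) = f_k(n+m)` for all `n ≥ 1`; in particular `U_{k,m} ∈ X_k`. -/
theorem stmt_17 (k : ℕ) (hk : 1 ≤ k) (m : ℕ) (hm1 : 1 ≤ m) (hm : m < 2 ^ k) :
    (∀ n : ℕ, 1 ≤ n → gSign (Uconst k m) n = fPer k (n + m)) ∧
    Uconst k m ∈ Xset k :=
  stmt_17_general k hk m hm
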